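/- arXiv:2009.13781 — 2 statements merged into one kernel-verified Lean document; each statement's English description precedes it below -/
import Mathlib

section
/- For every integer m ≥ 1, P(Po(m) < m) − P(Po(m+1) < m+1) = ∫_m^{m+1} ( t^m e^{−t} − m^m e^{−m} ) / m! dt. -/
open Finset MeasureTheory intervalIntegral

/-- `poissonLT lam m = P(Po(lam) < m) = e^{-lam} ∑_{k=0}^{m-1} lam^k / k!`. -/
noncomputable def poissonLT (lam : ℝ) (m : ℕ) : ℝ :=
  Real.exp (-lam) * ∑ k ∈ Finset.range m, lam ^ k / (Nat.factorial k : ℝ)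

/-! The derivative of `λ ↦ P(Po(λ) ≤ n)` telescopes to `-e^{-λ} λ^n / n!`, so by the fundamental
theorem of calculus `∫_m^{m+1} t^m e^{-t} / m! dt = P(Po(m) ≤ m) - P(Po(m+1) ≤ m)`. Subtracting the
integral of the constant `m^m e^{-m} / m!` turns `P(Po(m) ≤ m)` into `P(Po(m) < m)`. -/

open Nat

lemma poissonLT_succ (lam : ℝ) (n : ℕ) :
    poissonLT lam (n + 1) = poissonLT lam n + Real.exp (-lam) * (lam ^ n / n !) := by
  rw [poissonLT, poissonLT, sum_range_succ, mul_add]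

lemma hasDerivAt_poissonLT_succ (n : ℕ) (t : ℝ) :
    HasDerivAt (fun lam => poissonLT lam (n + 1)) (-(Real.exp (-t) * (t ^ n / n !))) t := by
  have hexp : HasDerivAt (fun s : ℝ => Real.exp (-s)) (-Real.exp (-t)) t := by
    simpa using (hasDerivAt_neg t).exp
  induction n with
  | zero => simpa [poissonLT] using hexp
  | succ n ih =>
    simp_rw [poissonLT_succ _ (n + 1)]
    have hterm := hexp.mul ((hasDerivAt_pow (n + 1) t).div_const ((n + 1) ! : ℝ))
    refine (ih.add hterm).congr_deriv ?_
    rw [Nat.factorial_succ, Nat.cast_mul]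
    field_simp
    push_cast
    ring

lemma integral_pow_mul_exp_neg_div_factorial (n : ℕ) (a b : ℝ) :
    ∫ t in a..b, t ^ n * Real.exp (-t) / n ! = poissonLT a (n + 1) - poissonLT b (n + 1) := by
  have hcont : Continuous fun t : ℝ => -(Real.exp (-t) * (t ^ n / n !)) := by fun_prop
  have hftc := integral_eq_sub_of_hasDerivAt (fun t _ => hasDerivAt_poissonLT_succ n t)
    (hcont.intervalIntegrable a b)
  rw [intervalIntegral.integral_neg] at hftc
  rw [← neg_sub, ← hftc, neg_neg]
  congr 1 with t
  ring

theorem stmt11_general (m : ℕ) :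
    poissonLT m m - poissonLT (m + 1) (m + 1)
      = ∫ t in (m : ℝ)..((m : ℝ) + 1),
          (t ^ m * Real.exp (-t) - (m : ℝ) ^ m * Real.exp (-(m : ℝ))) / (Nat.factorial m : ℝ) := by
  have hcont : Continuous fun t : ℝ => t ^ m * Real.exp (-t) / m ! := by fun_prop
  simp_rw [sub_div]
  rw [integral_sub (hcont.intervalIntegrable _ _) intervalIntegrable_const,
    intervalIntegral.integral_const, integral_pow_mul_exp_neg_div_factorial, poissonLT_succ (m : ℝ) m]
  ring

theorem stmt11 (m : ℕ) (hm : 1 ≤ m) :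
    poissonLT m m - poissonLT (m + 1) (m + 1)
      = ∫ t in (m : ℝ)..((m : ℝ) + 1),
          (t ^ m * Real.exp (-t) - (m : ℝ) ^ m * Real.exp (-(m : ℝ))) / (Nat.factorial m : ℝ) :=
  stmt11_general m
end

section
/- For every integer m ≥ 1, P(Po(m) ≤ m) − P(Po(m+1) ≤ m+1) = ∫_m^{m+1} ( t^{m+1} e^{−t} − m^{m+1} e^{−m} ) / (m+1)! dt. -/
/-! The distribution function `λ ↦ P(Po(λ) ≤ n)` has derivative `-e^{-λ} λ^n / n!`, so
`P(Po(a) ≤ n) - P(Po(b) ≤ n) = ∫_a^b t^n e^{-t} / n! dt`. Applied with `n = m + 1` on `[m, m + 1]`,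
this leaves only the extra term `e^{-m} m^{m+1} / (m+1)!` of `P(Po(m) ≤ m + 1)`, which is the
integral of a constant over an interval of length one. -/

open Finset MeasureTheory intervalIntegral

/-- `poissonLE lam m = P(Po(lam) ≤ m) = e^{-lam} ∑_{k=0}^{m} lam^k / k!`. -/
noncomputable def poissonLE (lam : ℝ) (m : ℕ) : ℝ :=
  Real.exp (-lam) * ∑ k ∈ Finset.range (m + 1), lam ^ k / (Nat.factorial k : ℝ)

lemma poissonLE_zero (lam : ℝ) : poissonLE lam 0 = Real.exp (-lam) := by
  simp [poissonLE]

lemma poissonLE_succ (lam : ℝ) (n : ℕ) :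
    poissonLE lam (n + 1)
      = poissonLE lam n + Real.exp (-lam) * lam ^ (n + 1) / (Nat.factorial (n + 1) : ℝ) := by
  rw [poissonLE, poissonLE, sum_range_succ]
  ring

lemma hasDerivAt_poissonLE (n : ℕ) (t : ℝ) :
    HasDerivAt (fun lam => poissonLE lam n)
      (-(t ^ n * Real.exp (-t) / (Nat.factorial n : ℝ))) t := by
  have hexp : HasDerivAt (fun lam => Real.exp (-lam)) (-Real.exp (-t)) t := by
    simpa using (hasDerivAt_neg t).exp
  induction n with
  | zero => simpa [poissonLE_zero] using hexp
  | succ n ih =>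
    simp only [poissonLE_succ]
    -- the derivative of the new term `e^{-λ} λ^{n+1} / (n+1)!` cancels the previous one
    refine (ih.add ((hexp.mul (hasDerivAt_pow (n + 1) t)).div_const _)).congr_deriv ?_
    rw [Nat.factorial_succ]
    push_cast
    field_simp
    ring

lemma poissonLE_sub_eq_integral (n : ℕ) (a b : ℝ) :
    poissonLE a n - poissonLE b n
      = ∫ t in a..b, t ^ n * Real.exp (-t) / (Nat.factorial n : ℝ) := by
  have hcont : Continuous fun t : ℝ => t ^ n * Real.exp (-t) / (Nat.factorial n : ℝ) := by
    fun_prop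
  rw [← neg_sub, ← integral_eq_sub_of_hasDerivAt (fun t _ => hasDerivAt_poissonLE n t)
    (hcont.neg.intervalIntegrable a b), intervalIntegral.integral_neg, neg_neg]

theorem stmt12_general (m : ℕ) :
    poissonLE m m - poissonLE (m + 1) (m + 1)
      = ∫ t in (m : ℝ)..((m : ℝ) + 1),
          (t ^ (m + 1) * Real.exp (-t) - (m : ℝ) ^ (m + 1) * Real.exp (-(m : ℝ)))
            / (Nat.factorial (m + 1) : ℝ) := by
  have hcont : Continuous fun t : ℝ => t ^ (m + 1) * Real.exp (-t) := by fun_prop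
  rw [intervalIntegral.integral_div,
    integral_sub (hcont.intervalIntegrable _ _) intervalIntegrable_const,
    intervalIntegral.integral_const, sub_div, ← intervalIntegral.integral_div,
    ← poissonLE_sub_eq_integral, poissonLE_succ (m : ℝ) m]
  ring

theorem stmt12 (m : ℕ) (hm : 1 ≤ m) :
    poissonLE m m - poissonLE (m + 1) (m + 1)
      = ∫ t in (m : ℝ)..((m : ℝ) + 1),
          (t ^ (m + 1) * Real.exp (-t) - (m : ℝ) ^ (m + 1) * Real.exp (-(m : ℝ)))
            / (Nat.factorial (m + 1) : ℝ) :=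
  stmt12_general m
end
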